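/- Let (V; f, g) be a dual-modular instance. Every locally maximin solution (p, q) induces a locally maximin allocation (f^p, g^q). Conversely, for every locally maximin allocation (x, y) ∈ B≥_f × B≤_g there exists a locally maximin solution (p, q) with (x, y) = (f^p, g^q). -/

import Mathlib

open Finset

variable {V : Type*} [Fintype V] [DecidableEq V]

/-- A set function is supermodular. -/
def Supermodular (f : Finset V → ℝ) : Prop :=
  ∀ A B : Finset V, f A + f B ≤ f (A ∩ B) + f (A ∪ B)

/-- A set function is submodular. -/
def Submodular (g : Finset V → ℝ) : Prop :=
  ∀ A B : Finset V, g (A ∩ B) + g (A ∪ B) ≤ g A + g B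

/-- A set function is monotone. -/
def MonotoneFn (f : Finset V → ℝ) : Prop :=
  ∀ A B : Finset V, A ⊆ B → f A ≤ f B

/-- A set function is strictly monotone. -/
def StrictMonoFn (g : Finset V → ℝ) : Prop :=
  ∀ A B : Finset V, A ⊂ B → g A < g B

/-- A dual-modular instance `(V; f, g)`: `f` is a nonnegative monotone supermodular
reward function, `g` is a nonnegative strictly monotone submodular cost function,
both vanishing on the empty set. -/
structure DualModular (f g : Finset V → ℝ) : Prop where
  f_nonneg : ∀ A, 0 ≤ f A
  g_nonneg : ∀ A, 0 ≤ g A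
  f_empty : f ∅ = 0
  g_empty : g ∅ = 0
  f_mono : MonotoneFn f
  g_strictMono : StrictMonoFn g
  f_supermodular : Supermodular f
  g_submodular : Submodular g

/-- Density of a subset. -/
noncomputable def density (f g : Finset V → ℝ) (S : Finset V) : ℝ := f S / g S

/-- Marginal contribution `h(S|A) = h(S ∪ A) - h(A)`. -/
def marginal (h : Finset V → ℝ) (S A : Finset V) : ℝ := h (S ∪ A) - h A

/-- Marginal density `ρ(S|A) = f(S|A)/g(S|A)`. -/
noncomputable def margDensity (f g : Finset V → ℝ) (S A : Finset V) : ℝ :=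
  marginal f S A / marginal g S A

/-- `S_{<i}`: the union of earlier parts in an indexed family. -/
def below {k : ℕ} (S : Fin k → Finset V) (i : Fin k) : Finset V :=
  (Finset.univ.filter (fun j => j < i)).biUnion S

/-- The density decomposition `V = S₁ ∪ … ∪ S_k`: each `S i` is a nonempty maximal
densest subset of the remaining instance with marginal functions. -/
structure IsDensityDecomposition (f g : Finset V → ℝ) {k : ℕ} (S : Fin k → Finset V) :
    Prop where
  nonempty : ∀ i, (S i).Nonempty
  disj : ∀ i, Disjoint (S i) (below S i)
  cover : Finset.univ.biUnion S = (Finset.univ : Finset V)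
  maxDensity : ∀ i, ∀ T : Finset V, T.Nonempty → Disjoint T (below S i) →
    margDensity f g T (below S i) ≤ margDensity f g (S i) (below S i)
  maximal : ∀ i, ∀ T : Finset V, T.Nonempty → Disjoint T (below S i) →
    margDensity f g (S i) (below S i) ≤ margDensity f g T (below S i) → T ⊆ S i

/-- `ρ_i`, the density of the `i`-th component of the decomposition. -/
noncomputable def decompDensity (f g : Finset V → ℝ) {k : ℕ} (S : Fin k → Finset V)
    (i : Fin k) : ℝ :=
  margDensity f g (S i) (below S i)

/-- Membership in the base contrapolymatroid `B≥_f`. -/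
def memBf (f : Finset V → ℝ) (x : V → ℝ) : Prop :=
  (∀ v, 0 ≤ x v) ∧ (∑ v, x v = f Finset.univ) ∧ ∀ A : Finset V, f A ≤ ∑ v ∈ A, x v

/-- Membership in the base polymatroid `B≤_g`. -/
def memBg (g : Finset V → ℝ) (y : V → ℝ) : Prop :=
  (∀ v, 0 ≤ y v) ∧ (∑ v, y v = g Finset.univ) ∧ ∀ A : Finset V, ∑ v ∈ A, y v ≤ g A

/-- An allocation is a pair `(x, y) ∈ B≥_f × B≤_g`. -/
def Allocation (f g : Finset V → ℝ) (x y : V → ℝ) : Prop := memBf f x ∧ memBg g y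

/-- The locally maximin condition for an allocation. -/
def LocallyMaximin (f g : Finset V → ℝ) (x y : V → ℝ) : Prop :=
  ∀ ρ : ℝ, 0 < ρ →
    (∑ v ∈ Finset.univ.filter (fun v => ρ ≤ x v / y v), x v
       = f (Finset.univ.filter (fun v => ρ ≤ x v / y v))) ∧
    (∑ v ∈ Finset.univ.filter (fun v => ρ ≤ x v / y v), y v
       = g (Finset.univ.filter (fun v => ρ ≤ x v / y v)))

/-- The multiset of induced densities, sorted in non-increasing order. -/
noncomputable def sortedDensities (x y : V → ℝ) : List ℝ :=
  ((Finset.univ.val.map (fun v => x v / y v)).sort (· ≤ ·)).reverse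

/-- An allocation is lexicographically optimal if its non-increasingly sorted density
vector is lexicographically minimal among all allocations. -/
def LexOptimal (f g : Finset V → ℝ) (x y : V → ℝ) : Prop :=
  Allocation f g x y ∧
  ∀ x' y' : V → ℝ, Allocation f g x' y' → sortedDensities x y ≤ sortedDensities x' y'

/-- The hockey-stick divergence `HS_γ(x ‖ y)`. -/
noncomputable def HS (γ : ℝ) (x y : V → ℝ) : ℝ := ∑ u, max (x u - γ * y u) 0

/-- The `θ`-divergence `D_θ(x ‖ y) = Σ_u y_u · θ(x_u / y_u)`. -/
noncomputable def Dtheta (θ : ℝ → ℝ) (x y : V → ℝ) : ℝ := ∑ u, y u * θ (x u / y u)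

/-- Permutations of `V`, encoded as bijections to positions `Fin |V|`;
`u ≺_σ v` iff `σ u < σ v`. -/
abbrev Perms (V : Type*) [Fintype V] := V ≃ Fin (Fintype.card V)

/-- `h^σ(u)`: the marginal contribution of `u` given the elements preceding it in `σ`. -/
def permVal (h : Finset V → ℝ) (σ : Perms V) (u : V) : ℝ :=
  h (insert u (Finset.univ.filter (fun w => σ w < σ u))) -
    h (Finset.univ.filter (fun w => σ w < σ u))

/-- A probability distribution on permutations of `V`. -/
def IsDist (p : Perms V → ℝ) : Prop := (∀ σ, 0 ≤ p σ) ∧ ∑ σ, p σ = 1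

/-- `h^p(u) = Σ_σ p_σ · h^σ(u)`. -/
noncomputable def distVal (h : Finset V → ℝ) (p : Perms V → ℝ) (u : V) : ℝ :=
  ∑ σ, p σ * permVal h σ u

/-- The density induced by a solution `(p, q)`. -/
noncomputable def solDensity (f g : Finset V → ℝ) (p q : Perms V → ℝ) (v : V) : ℝ :=
  distVal f p v / distVal g q v

/-- A solution `(p, q)` is locally maximin if whenever `u` has strictly larger induced
density than `v`, every permutation with positive weight puts `u` before `v`. -/
def LocallyMaximinSol (f g : Finset V → ℝ) (p q : Perms V → ℝ) : Prop :=
  ∀ u v : V, solDensity f g p q v < solDensity f g p q u →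
    ∀ σ : Perms V, (0 < p σ ∨ 0 < q σ) → σ u < σ v

/-- The convex-program objective `Φ_θ(p, q) = D_θ(f^p ‖ g^q)`. -/
noncomputable def Phi (θ : ℝ → ℝ) (f g : Finset V → ℝ) (p q : Perms V → ℝ) : ℝ :=
  Dtheta θ (distVal f p) (distVal g q)

/-!
Supermodularity of `f` puts every greedy vector `f^σ` in `B≥_f`, submodularity of `g` puts every
`g^σ` in `B≤_g`. If all permutations in the supports of `p` and `q` list `V` by non-increasing
density, every density superlevel set is an initial segment of each of them, and greedy vectors
are tight on initial segments.

Conversely, let `(x, y)` be locally maximin with densities `d`. If `x` were not a convex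
combination of the `f^σ` with `σ` listing `V` by non-increasing `d`, a separating weight vector
`w` would give `⟨w, f^σ⟩ > ⟨w, x⟩` for all such `σ`. Take `σ` sorting by `d` with ties broken
by decreasing `w`. Abel summation along `σ` writes `⟨w, x - f^σ⟩` as the sum of the gaps
`x(P) - f(P) ≥ 0` over the prefixes `P` of `σ`, weighted by the decrements of `w`. Now `w` can
increase only at a boundary between density levels, where `P` is a superlevel set and the gap
vanishes. The same argument for `-g` produces `q`.
-/

lemma StrictMonoFn.monotoneFn {α : Type*} {g : Finset α → ℝ} (hg : StrictMonoFn g) :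
    MonotoneFn g :=
  fun A B hAB => (eq_or_ssubset_of_subset hAB).elim (fun h => h ▸ le_rfl) fun h => (hg A B h).le

lemma Submodular.supermodular_neg {α : Type*} [DecidableEq α] {g : Finset α → ℝ}
    (hg : Submodular g) : Supermodular fun A => -g A :=
  fun A B => by linarith [hg A B]

lemma Supermodular.sub_le_sub_insert {α : Type*} [DecidableEq α] {f : Finset α → ℝ}
    (hf : Supermodular f) {s t : Finset α} {a : α} (hst : s ⊆ t) (ha : a ∉ t) :
    f (insert a s) - f s ≤ f (insert a t) - f t := by
  have hinter : insert a s ∩ t = s := by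
    rw [insert_inter_of_notMem ha, inter_eq_left.2 hst]
  have hunion : insert a s ∪ t = insert a t := by
    rw [insert_union, union_eq_right.2 hst]
  have := hf (insert a s) t
  rw [hinter, hunion] at this
  linarith

section Permutations

variable (σ : Perms V)

lemma permVal_nonneg {h : Finset V → ℝ} (hh : MonotoneFn h) (u : V) : 0 ≤ permVal h σ u :=
  sub_nonneg.2 <| hh _ _ (subset_insert _ _)

lemma permVal_neg (h : Finset V → ℝ) (u : V) :
    permVal (fun A => -h A) σ u = -permVal h σ u := by
  simp only [permVal]; ring

lemma sum_permVal_of_initial {h : Finset V → ℝ} (h0 : h ∅ = 0) {S : Finset V}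
    (hS : ∀ u ∈ S, ∀ v ∉ S, σ u < σ v) : ∑ v ∈ S, permVal h σ v = h S := by
  induction S using Finset.induction_on_max_value (fun v => σ v) with
  | empty => simp [h0]
  | insert a s ha hmax ih =>
    have hpred : univ.filter (fun w => σ w < σ a) = s := by
      ext w
      simp only [mem_filter, mem_univ, true_and]
      constructor
      · intro hw
        by_contra hws
        have hwa : w ≠ a := by rintro rfl; exact lt_irrefl _ hw
        exact lt_asymm hw (hS a (mem_insert_self a s) w (by simp [hwa, hws]))
      · exact fun hw => (hmax w hw).lt_of_ne fun he => ha (σ.injective he ▸ hw)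
    have hs : ∀ u ∈ s, ∀ v ∉ s, σ u < σ v := by
      intro u hu v hv
      by_cases hva : v = a
      · exact hva ▸ (hmax u hu).lt_of_ne fun he => ha (σ.injective he ▸ hu)
      · exact hS u (mem_insert_of_mem hu) v (by simp [hva, hv])
    rw [sum_insert ha, ih hs, permVal, hpred]
    ring

lemma le_sum_permVal_of_supermodular {h : Finset V → ℝ} (h0 : h ∅ = 0) (hh : Supermodular h)
    (A : Finset V) : h A ≤ ∑ v ∈ A, permVal h σ v := by
  induction A using Finset.induction_on_max_value (fun v => σ v) with
  | empty => simp [h0]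
  | insert a s ha hmax ih =>
    have hsub : s ⊆ univ.filter (fun w => σ w < σ a) := fun w hw =>
      mem_filter.2 ⟨mem_univ w, (hmax w hw).lt_of_ne fun he => ha (σ.injective he ▸ hw)⟩
    have hmarg := hh.sub_le_sub_insert (a := a) hsub (by simp)
    rw [sum_insert ha, permVal]
    linarith

lemma sum_permVal_le_of_submodular {h : Finset V → ℝ} (h0 : h ∅ = 0) (hh : Submodular h)
    (A : Finset V) : ∑ v ∈ A, permVal h σ v ≤ h A := by
  have := le_sum_permVal_of_supermodular σ (by simp [h0]) hh.supermodular_neg A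
  simp only [permVal_neg, sum_neg_distrib] at this
  linarith

end Permutations

section Distributions

variable {p : Perms V → ℝ}

lemma IsDist.sum_mul_eq_of_support (hp : IsDist p) {c : Perms V → ℝ} {C : ℝ}
    (hc : ∀ σ, p σ ≠ 0 → c σ = C) : ∑ σ, p σ * c σ = C := by
  have : ∀ σ ∈ univ, p σ * c σ = p σ * C := fun σ _ => by
    by_cases hσ : p σ = 0
    · simp [hσ]
    · rw [hc σ hσ]
  rw [sum_congr rfl this, ← sum_mul, hp.2, one_mul]

lemma IsDist.le_sum_mul (hp : IsDist p) {c : Perms V → ℝ} {C : ℝ} (hc : ∀ σ, C ≤ c σ) :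
    C ≤ ∑ σ, p σ * c σ :=
  calc C = ∑ σ, p σ * C := by rw [← sum_mul, hp.2, one_mul]
    _ ≤ ∑ σ, p σ * c σ := sum_le_sum fun σ _ => mul_le_mul_of_nonneg_left (hc σ) (hp.1 σ)

lemma IsDist.sum_mul_le (hp : IsDist p) {c : Perms V → ℝ} {C : ℝ} (hc : ∀ σ, c σ ≤ C) :
    ∑ σ, p σ * c σ ≤ C := by
  have := hp.le_sum_mul (c := fun σ => -c σ) (C := -C) fun σ => neg_le_neg (hc σ)
  simp only [mul_neg, sum_neg_distrib] at this
  linarith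

end Distributions

lemma sum_distVal (h : Finset V → ℝ) (p : Perms V → ℝ) (A : Finset V) :
    ∑ v ∈ A, distVal h p v = ∑ σ, p σ * ∑ v ∈ A, permVal h σ v := by
  simp only [distVal, mul_sum]
  exact sum_comm

lemma distVal_eq_sum_smul (h : Finset V → ℝ) (p : Perms V → ℝ) :
    distVal h p = ∑ σ, p σ • permVal h σ := by
  ext u
  simp [distVal]

lemma sum_distVal_of_initial {h : Finset V → ℝ} (h0 : h ∅ = 0) {p : Perms V → ℝ}
    (hp : IsDist p) {S : Finset V} (hS : ∀ σ, p σ ≠ 0 → ∀ u ∈ S, ∀ v ∉ S, σ u < σ v) :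
    ∑ v ∈ S, distVal h p v = h S := by
  rw [sum_distVal]
  exact hp.sum_mul_eq_of_support fun σ hσ => sum_permVal_of_initial σ h0 (hS σ hσ)

lemma memBf_distVal {f : Finset V → ℝ} (h0 : f ∅ = 0) (hmono : MonotoneFn f)
    (hsup : Supermodular f) {p : Perms V → ℝ} (hp : IsDist p) : memBf f (distVal f p) := by
  refine ⟨fun v => hp.le_sum_mul fun σ => permVal_nonneg σ hmono v, ?_, fun A => ?_⟩
  · exact sum_distVal_of_initial h0 hp (S := univ) (by simp)
  · rw [sum_distVal]
    exact hp.le_sum_mul fun σ => le_sum_permVal_of_supermodular σ h0 hsup A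

lemma memBg_distVal {g : Finset V → ℝ} (h0 : g ∅ = 0) (hmono : MonotoneFn g)
    (hsub : Submodular g) {q : Perms V → ℝ} (hq : IsDist q) : memBg g (distVal g q) := by
  refine ⟨fun v => hq.le_sum_mul fun σ => permVal_nonneg σ hmono v, ?_, fun A => ?_⟩
  · exact sum_distVal_of_initial h0 hq (S := univ) (by simp)
  · rw [sum_distVal]
    exact hq.sum_mul_le fun σ => sum_permVal_le_of_submodular σ h0 hsub A

lemma LocallyMaximinSol.locallyMaximin {f g : Finset V → ℝ} (hf0 : f ∅ = 0) (hg0 : g ∅ = 0)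
    {p q : Perms V → ℝ} (hp : IsDist p) (hq : IsDist q) (hsol : LocallyMaximinSol f g p q) :
    LocallyMaximin f g (distVal f p) (distVal g q) := by
  intro ρ _
  set S := univ.filter fun v => ρ ≤ solDensity f g p q v
  have hinit : ∀ σ, (0 < p σ ∨ 0 < q σ) → ∀ u ∈ S, ∀ v ∉ S, σ u < σ v := by
    intro σ hσ u hu v hv
    simp only [S, mem_filter, mem_univ, true_and, not_le] at hu hv
    exact hsol u v (hv.trans_le hu) σ hσ
  exact ⟨sum_distVal_of_initial hf0 hp fun σ hσ => hinit σ (.inl ((hp.1 σ).lt_of_ne' hσ)),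
    sum_distVal_of_initial hg0 hq fun σ hσ => hinit σ (.inr ((hq.1 σ).lt_of_ne' hσ))⟩

section Orders

variable {α : Type*} [Fintype α]

def prefixSet (σ : Perms α) (m : ℕ) : Finset α := univ.filter fun v => (σ v : ℕ) < m

def ListsByDesc (d : α → ℝ) (σ : Perms α) : Prop := ∀ u v, d v < d u → σ u < σ v

lemma prefixSet_of_card_le (σ : Perms α) {m : ℕ} (hm : Fintype.card α ≤ m) :
    prefixSet σ m = univ := by
  ext v
  simpa [prefixSet] using (σ v).isLt.trans_le hm

lemma prefixSet_succ_self [DecidableEq α] (σ : Perms α) (u : α) :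
    prefixSet σ (σ u + 1) = insert u (prefixSet σ (σ u)) := by
  ext v
  simp only [prefixSet, mem_filter, mem_univ, true_and, mem_insert, Nat.lt_succ_iff_lt_or_eq,
    Fin.val_inj, σ.injective.eq_iff]
  tauto

lemma prefixSet_eq_filter_le {d : α → ℝ} {σ : Perms α} (hσ : ListsByDesc d σ) {u u' : α}
    (hu' : (σ u' : ℕ) = σ u + 1) (hd : d u' < d u) :
    prefixSet σ (σ u') = univ.filter fun v => d u ≤ d v := by
  ext v
  simp only [prefixSet, mem_filter, mem_univ, true_and]
  constructor
  · intro hv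
    by_contra hlt
    have := hσ u v (not_le.1 hlt)
    rw [Fin.lt_def] at this
    omega
  · exact fun hv => hσ v u' (hd.trans_le hv)

lemma exists_perm_strictMono {K : Type*} [LinearOrder K] (key : α → K)
    (hkey : Function.Injective key) :
    ∃ σ : Perms α, ∀ u v, key u < key v → σ u < σ v := by
  let _ : LinearOrder α := LinearOrder.lift' key hkey
  exact ⟨(Fintype.orderIsoFinOfCardEq α rfl).symm.toEquiv,
    fun u v huv => (Fintype.orderIsoFinOfCardEq α rfl).symm.strictMono huv⟩

lemma exists_listsByDesc_tiebreak (d w : α → ℝ) :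
    ∃ σ, ListsByDesc d σ ∧ ∀ u v, d u = d v → w v < w u → σ u < σ v := by
  let key : α → ℝ ×ₗ ℝ ×ₗ Fin (Fintype.card α) :=
    fun v => toLex (-d v, toLex (-w v, Fintype.equivFin α v))
  have hkey : Function.Injective key := fun u v huv => by
    simpa [key] using congrArg (fun k => (ofLex (ofLex k).2).2) huv
  obtain ⟨σ, hσ⟩ := exists_perm_strictMono key hkey
  refine ⟨σ, fun u v hd => hσ u v ?_, fun u v hd hw => hσ u v ?_⟩
  · exact Prod.Lex.lt_iff.2 (Or.inl (neg_lt_neg hd))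
  · exact Prod.Lex.lt_iff.2
      (Or.inr ⟨congrArg Neg.neg hd, Prod.Lex.lt_iff.2 (Or.inl (neg_lt_neg hw))⟩)

end Orders

lemma permVal_eq_prefixSet (h : Finset V → ℝ) (σ : Perms V) (u : V) :
    permVal h σ u = h (prefixSet σ (σ u + 1)) - h (prefixSet σ (σ u)) := by
  have : univ.filter (fun w => σ w < σ u) = prefixSet σ (σ u) := by
    ext w
    simp only [prefixSet, mem_filter, mem_univ, true_and, Fin.lt_def]
  rw [permVal, this, prefixSet_succ_self]

lemma sum_range_mul_sub_nonneg {a D : ℕ → ℝ} {n : ℕ} (hD0 : D 0 = 0) (hDn : D n = 0)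
    (hstep : ∀ i, 0 ≤ (a i - a (i + 1)) * D (i + 1)) :
    0 ≤ ∑ i ∈ range n, a i * (D (i + 1) - D i) := by
  have hpartial : ∀ m, a m * D (m + 1) ≤ ∑ i ∈ range (m + 1), a i * (D (i + 1) - D i) := by
    intro m
    induction m with
    | zero => simp [hD0]
    | succ m ih =>
      rw [sum_range_succ]
      nlinarith [hstep m]
  cases n with
  | zero => simp
  | succ m => simpa [hDn] using hpartial m

lemma sum_mul_permVal_le {h : Finset V → ℝ} {z w : V → ℝ} (σ : Perms V) (h0 : h ∅ = 0)
    (hub : ∀ A, h A ≤ ∑ v ∈ A, z v) (htot : ∑ v, z v = h univ)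
    (htight : ∀ u u', (σ u' : ℕ) = σ u + 1 → w u < w u' →
      ∑ v ∈ prefixSet σ (σ u'), z v = h (prefixSet σ (σ u'))) :
    ∑ v, w v * permVal h σ v ≤ ∑ v, w v * z v := by
  set D : ℕ → ℝ := fun m => ∑ v ∈ prefixSet σ m, z v - h (prefixSet σ m) with hD
  set a : ℕ → ℝ := fun i => if hi : i < Fintype.card V then w (σ.symm ⟨i, hi⟩) else 0
    with ha
  have hD_nonneg : ∀ m, 0 ≤ D m := fun m => sub_nonneg.2 (hub _)
  have hD_top : ∀ m, Fintype.card V ≤ m → D m = 0 := fun m hm => by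
    simp only [hD, prefixSet_of_card_le σ hm, htot, sub_self]
  have ha_pos : ∀ u, a (σ u) = w u := fun u => by simp [ha]
  have hdiff : ∀ u, z u - permVal h σ u = D (σ u + 1) - D (σ u) := fun u => by
    rw [permVal_eq_prefixSet, hD]
    simp only [prefixSet_succ_self, sum_insert (show u ∉ prefixSet σ (σ u) by simp [prefixSet])]
    ring
  have hsum : ∑ v, w v * (z v - permVal h σ v) =
      ∑ i ∈ range (Fintype.card V), a i * (D (i + 1) - D i) := by
    rw [← Fin.sum_univ_eq_sum_range (fun i => a i * (D (i + 1) - D i)), ← σ.sum_comp]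
    exact sum_congr rfl fun u _ => by rw [ha_pos, hdiff]
  have hstep : ∀ i, 0 ≤ (a i - a (i + 1)) * D (i + 1) := by
    intro i
    by_cases hi : i + 1 < Fintype.card V
    · obtain ⟨u, rfl⟩ : ∃ u, (σ u : ℕ) = i := ⟨σ.symm ⟨i, by omega⟩, by simp⟩
      obtain ⟨u', hu'⟩ : ∃ u', (σ u' : ℕ) = σ u + 1 := ⟨σ.symm ⟨_, hi⟩, by simp⟩
      rw [← hu', ha_pos, ha_pos]
      rcases le_or_gt (w u') (w u) with hle | hlt
      · exact mul_nonneg (sub_nonneg.2 hle) (hD_nonneg _)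
      · simp [hD, htight u u' hu' hlt]
    · rw [hD_top _ (by omega), mul_zero]
  have hgap := sum_range_mul_sub_nonneg (by simp [hD, prefixSet, h0]) (hD_top _ le_rfl) hstep
  rw [← hsum] at hgap
  simp only [mul_sub, sum_sub_distrib, sub_nonneg] at hgap
  exact hgap

lemma sum_mul_permVal_le_of_listsByDesc {h : Finset V → ℝ} {z d w : V → ℝ} {σ : Perms V}
    (h0 : h ∅ = 0) (hub : ∀ A, h A ≤ ∑ v ∈ A, z v) (htot : ∑ v, z v = h univ)
    (hd0 : ∀ v, 0 ≤ d v)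
    (htight : ∀ ρ, 0 < ρ →
      ∑ v ∈ univ.filter (fun v => ρ ≤ d v), z v = h (univ.filter fun v => ρ ≤ d v))
    (hσd : ListsByDesc d σ) (hσw : ∀ u v, d u = d v → w v < w u → σ u < σ v) :
    ∑ v, w v * permVal h σ v ≤ ∑ v, w v * z v := by
  refine sum_mul_permVal_le σ h0 hub htot fun u u' hu' hw => ?_
  have hnot : ¬σ u' < σ u := by rw [Fin.lt_def]; omega
  have hd : d u' < d u := by
    rcases lt_trichotomy (d u') (d u) with hlt | heq | hgt
    · exact hlt
    · exact absurd (hσw u' u heq hw) hnot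
    · exact absurd (hσd u' u hgt) hnot
  rw [prefixSet_eq_filter_le hσd hu' hd]
  exact htight _ ((hd0 u').trans_lt hd)

lemma exists_isDist_of_mem_convexHull {E : Type*} [AddCommGroup E] [Module ℝ E]
    {F : Perms V → E} {S : Set (Perms V)} {x : E} (hx : x ∈ convexHull ℝ (F '' S)) :
    ∃ p, IsDist p ∧ (∀ σ, p σ ≠ 0 → σ ∈ S) ∧ ∑ σ, p σ • F σ = x := by
  obtain ⟨ι, _, c, y, hc0, hc1, hyS, rfl⟩ := mem_convexHull_iff_exists_fintype.1 hx
  choose τ hτS hτ using hyS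
  refine ⟨fun σ => ∑ i ∈ univ.filter (τ · = σ), c i,
    ⟨fun σ => sum_nonneg fun i _ => hc0 i, ?_⟩, fun σ hσ => ?_, ?_⟩
  · rw [sum_fiberwise, hc1]
  · obtain ⟨i, hi, -⟩ := exists_ne_zero_of_sum_ne_zero hσ
    exact (mem_filter.1 hi).2 ▸ hτS i
  · calc ∑ σ, (∑ i ∈ univ.filter (τ · = σ), c i) • F σ
        = ∑ σ, ∑ i ∈ univ.filter (τ · = σ), c i • y i := sum_congr rfl fun σ _ => by
          rw [sum_smul]
          exact sum_congr rfl fun i hi => by rw [← hτ i, (mem_filter.1 hi).2]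
      _ = ∑ i, c i • y i := sum_fiberwise _ _ _

theorem exists_isDist_listsByDesc_distVal_eq_of_le_sum {h : Finset V → ℝ} {z d : V → ℝ}
    (h0 : h ∅ = 0) (hub : ∀ A, h A ≤ ∑ v ∈ A, z v) (htot : ∑ v, z v = h univ)
    (hd0 : ∀ v, 0 ≤ d v)
    (htight : ∀ ρ, 0 < ρ →
      ∑ v ∈ univ.filter (fun v => ρ ≤ d v), z v = h (univ.filter fun v => ρ ≤ d v)) :
    ∃ p, IsDist p ∧ (∀ σ, p σ ≠ 0 → ListsByDesc d σ) ∧ distVal h p = z := by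
  suffices hz : z ∈ convexHull ℝ (permVal h '' {σ | ListsByDesc d σ}) by
    obtain ⟨p, hp, hpS, hpz⟩ := exists_isDist_of_mem_convexHull hz
    exact ⟨p, hp, hpS, by rw [distVal_eq_sum_smul, hpz]⟩
  by_contra hz
  obtain ⟨φ, c, hφz, hφhull⟩ := geometric_hahn_banach_point_closed (convex_convexHull ℝ _)
    ((Set.toFinite _).isClosed_convexHull (𝕜 := ℝ)) hz
  set w : V → ℝ := fun v => φ fun u => if v = u then 1 else 0
  have hφ : ∀ ζ : V → ℝ, φ ζ = ∑ v, w v * ζ v := fun ζ => by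
    simp only [w, mul_comm, ← smul_eq_mul]
    exact φ.toLinearMap.pi_apply_eq_sum_univ ζ
  obtain ⟨σ, hσd, hσw⟩ := exists_listsByDesc_tiebreak d w
  have hle := sum_mul_permVal_le_of_listsByDesc h0 hub htot hd0 htight hσd hσw
  have hgt := hφhull _ (subset_convexHull ℝ _ ⟨σ, hσd, rfl⟩)
  rw [hφ] at hφz hgt
  linarith

theorem exists_isDist_listsByDesc_distVal_eq_of_sum_le {g : Finset V → ℝ} {y d : V → ℝ}
    (h0 : g ∅ = 0) (hub : ∀ A, ∑ v ∈ A, y v ≤ g A) (htot : ∑ v, y v = g univ)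
    (hd0 : ∀ v, 0 ≤ d v)
    (htight : ∀ ρ, 0 < ρ →
      ∑ v ∈ univ.filter (fun v => ρ ≤ d v), y v = g (univ.filter fun v => ρ ≤ d v)) :
    ∃ q, IsDist q ∧ (∀ σ, q σ ≠ 0 → ListsByDesc d σ) ∧ distVal g q = y := by
  obtain ⟨q, hq, hqd, hqy⟩ := exists_isDist_listsByDesc_distVal_eq_of_le_sum
    (h := fun A => -g A) (z := -y) (by simp [h0]) (fun A => by simp [hub A]) (by simp [htot]) hd0
    (fun ρ hρ => by simp [htight ρ hρ])
  refine ⟨q, hq, hqd, funext fun u => neg_injective ?_⟩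
  simpa [distVal, permVal_neg] using congrFun hqy u

/-- Fact 2.7: locally maximin solutions induce locally maximin
allocations, and every locally maximin allocation is induced by some locally maximin
solution. -/
theorem locally_maximin_two_representations (f g : Finset V → ℝ)
    (hdm : DualModular f g) :
    (∀ p q : Perms V → ℝ, IsDist p → IsDist q → LocallyMaximinSol f g p q →
      Allocation f g (distVal f p) (distVal g q) ∧
        LocallyMaximin f g (distVal f p) (distVal g q)) ∧
    (∀ x y : V → ℝ, Allocation f g x y → LocallyMaximin f g x y →
      ∃ p q : Perms V → ℝ, IsDist p ∧ IsDist q ∧ LocallyMaximinSol f g p q ∧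
        distVal f p = x ∧ distVal g q = y) := by
  refine ⟨fun p q hp hq hsol => ⟨⟨?_, ?_⟩, ?_⟩, fun x y ⟨hx, hy⟩ hlm => ?_⟩
  · exact memBf_distVal hdm.f_empty hdm.f_mono hdm.f_supermodular hp
  · exact memBg_distVal hdm.g_empty hdm.g_strictMono.monotoneFn hdm.g_submodular hq
  · exact hsol.locallyMaximin hdm.f_empty hdm.g_empty hp hq
  have hd0 : ∀ v, 0 ≤ x v / y v := fun v => div_nonneg (hx.1 v) (hy.1 v)
  obtain ⟨p, hp, hpd, rfl⟩ := exists_isDist_listsByDesc_distVal_eq_of_le_sum hdm.f_empty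
    hx.2.2 hx.2.1 hd0 fun ρ hρ => (hlm ρ hρ).1
  obtain ⟨q, hq, hqd, rfl⟩ := exists_isDist_listsByDesc_distVal_eq_of_sum_le hdm.g_empty
    hy.2.2 hy.2.1 hd0 fun ρ hρ => (hlm ρ hρ).2
  refine ⟨p, q, hp, hq, fun u v hlt σ hσ => ?_, rfl, rfl⟩
  rcases hσ with hσ | hσ
  · exact hpd σ hσ.ne' u v hlt
  · exact hqd σ hσ.ne' u v hlt
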